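/- With the notation of the doubling construction: the digraph Γ is (G,2s)-arc-transitive, i.e. G = ⟨X × X, t⟩ acts transitively on the set of 2s-arcs of Γ. -/
import Mathlib


namespace Doubling

variable {W : Type*}

/-- The arc set of a digraph is asymmetric (in particular loopless). -/
def IsDigraph {α : Type*} (B : α → α → Prop) : Prop := ∀ u v : α, B u v → ¬ B v u

/-- Connectivity of the underlying undirected graph. -/
def Connected {α : Type*} (B : α → α → Prop) : Prop :=
  ∀ u v : α, Relation.ReflTransGen (fun a b => B a b ∨ B b a) u v

/-- The underlying undirected graph is bipartite. -/
def Bipartite {α : Type*} (B : α → α → Prop) : Prop :=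
  ∃ S : Set α, ∀ u v : α, B u v → (u ∈ S ↔ v ∉ S)

/-- `G` consists of automorphisms of the digraph with arc set `B`. -/
def PreservesArcs {α : Type*} (B : α → α → Prop) (G : Subgroup (Equiv.Perm α)) : Prop :=
  ∀ g ∈ G, ∀ u v : α, B u v → B (g u) (g v)

/-- `G` is transitive on vertices. -/
def VertexTransitive {α : Type*} (G : Subgroup (Equiv.Perm α)) : Prop :=
  ∀ u v : α, ∃ g ∈ G, g u = v

/-- `p` is an `s`-arc of the digraph with arc set `B`. -/
def IsArcSeq {α : Type*} (B : α → α → Prop) (s : ℕ) (p : Fin (s + 1) → α) : Prop :=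
  ∀ i : Fin s, B (p i.castSucc) (p i.succ)

/-- `G` is transitive on the `s`-arcs of the digraph with arc set `B`. -/
def ArcTransitive {α : Type*} (B : α → α → Prop) (G : Subgroup (Equiv.Perm α)) (s : ℕ) : Prop :=
  ∀ p q : Fin (s + 1) → α, IsArcSeq B s p → IsArcSeq B s q →
    ∃ g ∈ G, ∀ i : Fin (s + 1), g (p i) = q i

/-- Every vertex of the digraph with arc set `B` has out-valency and in-valency `k`. -/
def Valency {α : Type*} (B : α → α → Prop) (k : ℕ) : Prop :=
  ∀ v : α, {w : α | B v w}.ncard = k ∧ {w : α | B w v}.ncard = k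

/-- The arc set of the doubling digraph `Γ` on `VΔ × VΔ × Z₂`:
`(v,w,0) → (v',w',1)` iff `v' = v` and `(w,w') ∈ AΔ`, and
`(v,w,1) → (v',w',0)` iff `(v,v') ∈ AΔ` and `w' = w`. -/
def doubleArc (B : W → W → Prop) :
    W × W × ZMod 2 → W × W × ZMod 2 → Prop :=
  fun u u' =>
    (u.2.2 = 0 ∧ u'.2.2 = 1 ∧ u'.1 = u.1 ∧ B u.2.1 u'.2.1) ∨
    (u.2.2 = 1 ∧ u'.2.2 = 0 ∧ B u.1 u'.1 ∧ u.2.1 = u'.2.1)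

/-- The permutation `(x,y) : (v,w,δ) ↦ (v^x, w^y, δ)` of `VΔ × VΔ × Z₂`. -/
def pairPerm (x y : Equiv.Perm W) : Equiv.Perm (W × W × ZMod 2) :=
  Equiv.prodCongr x (Equiv.prodCongr y (Equiv.refl (ZMod 2)))

/-- The embedding of `Sym(VΔ) × Sym(VΔ)` into `Sym(VΔ × VΔ × Z₂)`. -/
def pairHom : Equiv.Perm W × Equiv.Perm W →* Equiv.Perm (W × W × ZMod 2) where
  toFun p := pairPerm p.1 p.2
  map_one' := by
    ext u <;> simp [pairPerm]
  map_mul' a b := by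
    ext u <;> simp [pairPerm]

/-- The permutation `τ : (v,w,δ) ↦ (w,v,δ+1)` of `VΔ × VΔ × Z₂`. -/
def tauPerm : Equiv.Perm (W × W × ZMod 2) where
  toFun u := (u.2.1, u.1, u.2.2 + 1)
  invFun u := (u.2.1, u.1, u.2.2 + 1)
  left_inv := by
    have h : ∀ z : ZMod 2, z + 1 + 1 = z := by decide
    intro u
    simp [h]
  right_inv := by
    have h : ∀ z : ZMod 2, z + 1 + 1 = z := by decide
    intro u
    simp [h]

/-- The permutation `t = (g,1)τ : (v,w,δ) ↦ (w, v^g, δ+1)`. -/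
def tPerm (g : Equiv.Perm W) : Equiv.Perm (W × W × ZMod 2) :=
  tauPerm * pairPerm g 1

/-- The group `G⁺ = X × X` acting coordinatewise on `VΔ × VΔ × Z₂`. -/
def doubleGroupPlus (X : Subgroup (Equiv.Perm W)) : Subgroup (Equiv.Perm (W × W × ZMod 2)) :=
  Subgroup.map pairHom (X.prod X)

/-- The group `G = ⟨G⁺, t⟩`. -/
def doubleGroup (X : Subgroup (Equiv.Perm W)) (g : Equiv.Perm W) :
    Subgroup (Equiv.Perm (W × W × ZMod 2)) :=
  doubleGroupPlus X ⊔ Subgroup.closure {tPerm g}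


lemma tPerm_apply (g : Equiv.Perm W) (u : W × W × ZMod 2) :
    tPerm g u = (u.2.1, g u.1, u.2.2 + 1) := rfl

lemma pairPerm_apply (x y : Equiv.Perm W) (u : W × W × ZMod 2) :
    pairPerm x y u = (x u.1, y u.2.1, u.2.2) := rfl

lemma doubleArc_parity {B : W → W → Prop} {u u' : W × W × ZMod 2}
    (h : doubleArc B u u') : u'.2.2 = u.2.2 + 1 := by
  rcases h with ⟨h0, h1, _, _⟩ | ⟨h0, h1, _, _⟩ <;> rw [h0, h1] <;> decide

lemma tPerm_arc {B : W → W → Prop} {g : Equiv.Perm W}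
    (hg : ∀ a b, B a b → B (g a) (g b)) {u u' : W × W × ZMod 2}
    (h : doubleArc B u u') : doubleArc B (tPerm g u) (tPerm g u') := by
  rcases h with ⟨h0, h1, h2, h3⟩ | ⟨h0, h1, h2, h3⟩
  · right
    refine ⟨?_, ?_, h3, ?_⟩
    · show u.2.2 + 1 = 1; rw [h0]; decide
    · show u'.2.2 + 1 = 0; rw [h1]; decide
    · show g u.1 = g u'.1; rw [h2]
  · left
    refine ⟨?_, ?_, h3.symm, hg _ _ h2⟩
    · show u.2.2 + 1 = 0; rw [h0]; decide
    · show u'.2.2 + 1 = 1; rw [h1]; decide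

/-- first coordinates of a `2s`-arc form an `s`-arc -/
lemma extractA {B : W → W → Prop} {s : ℕ} (P : ℕ → W × W × ZMod 2)
    (hP : ∀ n, n < 2 * s → doubleArc B (P n) (P (n + 1))) :
    IsArcSeq B s (fun j : Fin (s + 1) => (P (2 * j.1)).1) := by
  intro j
  simp only [Fin.coe_castSucc, Fin.val_succ]
  have h1 := hP (2 * j.1) (by omega)
  have h2 := hP (2 * j.1 + 1) (by omega)
  have e : 2 * (j.1 + 1) = 2 * j.1 + 1 + 1 := by ring
  rw [e]
  rcases h1 with ⟨e0, e1, efst, hB⟩ | ⟨e0, e1, hB, esnd⟩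
  · rcases h2 with ⟨f0, _, _, _⟩ | ⟨_, _, hB', fsnd⟩
    · rw [e1] at f0; exact absurd f0 (by decide)
    · rw [← efst]; exact hB'
  · rcases h2 with ⟨_, _, ffst, _⟩ | ⟨f0, _, _, _⟩
    · rw [ffst]; exact hB
    · rw [e1] at f0; exact absurd f0 (by decide)

/-- second coordinates of a `2s`-arc form an `s`-arc -/
lemma extractB {B : W → W → Prop} {s : ℕ} (P : ℕ → W × W × ZMod 2)
    (hP : ∀ n, n < 2 * s → doubleArc B (P n) (P (n + 1))) :
    IsArcSeq B s (fun j : Fin (s + 1) => (P (2 * j.1)).2.1) := by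
  intro j
  simp only [Fin.coe_castSucc, Fin.val_succ]
  have h1 := hP (2 * j.1) (by omega)
  have h2 := hP (2 * j.1 + 1) (by omega)
  have e : 2 * (j.1 + 1) = 2 * j.1 + 1 + 1 := by ring
  rw [e]
  rcases h1 with ⟨e0, e1, efst, hB⟩ | ⟨e0, e1, hB, esnd⟩
  · rcases h2 with ⟨f0, _, _, _⟩ | ⟨_, _, _, fsnd⟩
    · rw [e1] at f0; exact absurd f0 (by decide)
    · rw [← fsnd]; exact hB
  · rcases h2 with ⟨_, _, _, hB'⟩ | ⟨f0, _, _, _⟩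
    · rw [esnd]; exact hB'
    · rw [e1] at f0; exact absurd f0 (by decide)

/-- `G⁺` is transitive on `2s`-arcs with the same starting parity. -/
lemma double_same_parity {B : W → W → Prop} {X : Subgroup (Equiv.Perm W)} {s : ℕ}
    (hat : ArcTransitive B X s)
    (p q : Fin (2 * s + 1) → W × W × ZMod 2)
    (hp : IsArcSeq (doubleArc B) (2 * s) p) (hq : IsArcSeq (doubleArc B) (2 * s) q)
    (h0 : (p 0).2.2 = (q 0).2.2) :
    ∃ h ∈ doubleGroupPlus X, ∀ i : Fin (2 * s + 1), h (p i) = q i := by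
  set P : ℕ → W × W × ZMod 2 := fun n => p ⟨min n (2 * s), by omega⟩ with hPdef
  set Q : ℕ → W × W × ZMod 2 := fun n => q ⟨min n (2 * s), by omega⟩ with hQdef
  have hpP : ∀ i : Fin (2 * s + 1), p i = P i.1 := by
    intro i
    simp only [hPdef]
    congr 1
    refine Fin.ext ?_
    have := i.isLt
    simp only [Fin.val_mk]
    omega
  have hqQ : ∀ i : Fin (2 * s + 1), q i = Q i.1 := by
    intro i
    simp only [hQdef]
    congr 1
    refine Fin.ext ?_
    have := i.isLt
    simp only [Fin.val_mk]
    omega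
  have hP : ∀ n, n < 2 * s → doubleArc B (P n) (P (n + 1)) := by
    intro n hn
    have h := hp ⟨n, hn⟩
    have e1 : p ((⟨n, hn⟩ : Fin (2 * s)).castSucc) = P n := by
      rw [hpP]; congr 1
    have e2 : p ((⟨n, hn⟩ : Fin (2 * s)).succ) = P (n + 1) := by
      rw [hpP]; congr 1
    rw [e1, e2] at h; exact h
  have hQ : ∀ n, n < 2 * s → doubleArc B (Q n) (Q (n + 1)) := by
    intro n hn
    have h := hq ⟨n, hn⟩
    have e1 : q ((⟨n, hn⟩ : Fin (2 * s)).castSucc) = Q n := by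
      rw [hqQ]; congr 1
    have e2 : q ((⟨n, hn⟩ : Fin (2 * s)).succ) = Q (n + 1) := by
      rw [hqQ]; congr 1
    rw [e1, e2] at h; exact h
  have h00 : (P 0).2.2 = (Q 0).2.2 := by
    have e1 := hpP 0
    have e2 := hqQ 0
    simp only [Fin.val_zero] at e1 e2
    rw [← e1, ← e2]; exact h0
  have hPpar : ∀ n, n ≤ 2 * s → (P n).2.2 = (P 0).2.2 + (n : ZMod 2) := by
    intro n
    induction n with
    | zero => intro _; simp
    | succ m ih =>
      intro hn
      rw [doubleArc_parity (hP m (by omega)), ih (by omega)]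
      push_cast
      ring
  have hQpar : ∀ n, n ≤ 2 * s → (Q n).2.2 = (Q 0).2.2 + (n : ZMod 2) := by
    intro n
    induction n with
    | zero => intro _; simp
    | succ m ih =>
      intro hn
      rw [doubleArc_parity (hQ m (by omega)), ih (by omega)]
      push_cast
      ring
  have hpar : ∀ n, n ≤ 2 * s → (P n).2.2 = (Q n).2.2 := by
    intro n hn
    rw [hPpar n hn, hQpar n hn, h00]
  obtain ⟨x, hxX, hx⟩ := hat _ _ (extractA P hP) (extractA Q hQ)
  obtain ⟨y, hyX, hy⟩ := hat _ _ (extractB P hP) (extractB Q hQ)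
  have key : ∀ n, n ≤ 2 * s → x (P n).1 = (Q n).1 ∧ y (P n).2.1 = (Q n).2.1 := by
    intro n hn
    rcases Nat.even_or_odd n with ⟨j, hj⟩ | ⟨j, hj⟩
    · have hn2 : n = 2 * j := by omega
      subst hn2
      exact ⟨hx ⟨j, by omega⟩, hy ⟨j, by omega⟩⟩
    · have hn2 : n = 2 * j + 1 := by omega
      subst hn2
      have hxj : x (P (2 * j)).1 = (Q (2 * j)).1 := hx ⟨j, by omega⟩
      have hyj : y (P (2 * j)).2.1 = (Q (2 * j)).2.1 := hy ⟨j, by omega⟩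
      have hxj1 : x (P (2 * j + 1 + 1)).1 = (Q (2 * j + 1 + 1)).1 := by
        have := hx ⟨j + 1, by omega⟩
        have e : 2 * (j + 1) = 2 * j + 1 + 1 := by ring
        simp only [e] at this
        exact this
      have hyj1 : y (P (2 * j + 1 + 1)).2.1 = (Q (2 * j + 1 + 1)).2.1 := by
        have := hy ⟨j + 1, by omega⟩
        have e : 2 * (j + 1) = 2 * j + 1 + 1 := by ring
        simp only [e] at this
        exact this
      have h1 := hP (2 * j) (by omega)
      have h2 := hP (2 * j + 1) (by omega)
      have k1 := hQ (2 * j) (by omega)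
      have k2 := hQ (2 * j + 1) (by omega)
      have hpj := hpar (2 * j) (by omega)
      rcases h1 with ⟨e0, e1, efst, _⟩ | ⟨e0, e1, _, esnd⟩
      · -- parity of P (2j) is 0
        rcases k1 with ⟨f0, f1, ffst, _⟩ | ⟨f0, _, _, _⟩
        · rcases h2 with ⟨g0, _, _, _⟩ | ⟨_, _, _, gsnd⟩
          · rw [e1] at g0; exact absurd g0 (by decide)
          · rcases k2 with ⟨m0, _, _, _⟩ | ⟨_, _, _, msnd⟩
            · rw [f1] at m0; exact absurd m0 (by decide)
            · constructor
              · rw [efst, ffst, hxj]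
              · rw [gsnd, msnd, hyj1]
        · rw [← hpj, e0] at f0; exact absurd f0 (by decide)
      · -- parity of P (2j) is 1
        rcases k1 with ⟨f0, _, _, _⟩ | ⟨f0, f1, _, fsnd⟩
        · rw [← hpj, e0] at f0; exact absurd f0 (by decide)
        · rcases h2 with ⟨_, _, gfst, _⟩ | ⟨g0, _, _, _⟩
          · rcases k2 with ⟨_, _, mfst, _⟩ | ⟨m0, _, _, _⟩
            · constructor
              · rw [← gfst, ← mfst, hxj1]
              · rw [← esnd, ← fsnd, hyj]
            · rw [f1] at m0; exact absurd m0 (by decide)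
          · rw [e1] at g0; exact absurd g0 (by decide)
  refine ⟨pairPerm x y, Subgroup.mem_map.2 ⟨(x, y), Subgroup.mem_prod.2 ⟨hxX, hyX⟩, rfl⟩, ?_⟩
  intro i
  rw [hpP i, hqQ i, pairPerm_apply]
  have hi := i.isLt
  obtain ⟨k1, k2⟩ := key i.1 (by omega)
  have k3 := hpar i.1 (by omega)
  rw [k1, k2, k3]

theorem doubling_two_s_arc_transitive
    [Finite W] (B : W → W → Prop) (X : Subgroup (Equiv.Perm W)) (s k : ℕ)
    (v₀ v₁ : W) (g : Equiv.Perm W)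
    (hdig : IsDigraph B) (hk : 2 ≤ k) (hval : Valency B k)
    (hAut : PreservesArcs B X) (hvt : VertexTransitive X)
    (hs : 2 ≤ s) (hat : ArcTransitive B X s)
    (harc : B v₀ v₁) (hg : g ∈ X) (hgv : g v₀ = v₁) :
    -- Γ is (G, 2s)-arc-transitive
    ArcTransitive (doubleArc B) (doubleGroup X g) (2 * s) := by
  intro p q hp hq
  have hg' : ∀ a b : W, B a b → B (g a) (g b) := hAut g hg
  have hplus : doubleGroupPlus X ≤ doubleGroup X g := le_sup_left
  by_cases h : (p 0).2.2 = (q 0).2.2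
  · obtain ⟨h', hmem, hh⟩ := double_same_parity hat p q hp hq h
    exact ⟨h', hplus hmem, hh⟩
  · have hp' : IsArcSeq (doubleArc B) (2 * s) (fun i => tPerm g (p i)) :=
      fun i => tPerm_arc hg' (hp i)
    have h0' : ((fun i => tPerm g (p i)) 0).2.2 = (q 0).2.2 := by
      show (p 0).2.2 + 1 = (q 0).2.2
      revert h
      generalize (p 0).2.2 = a
      generalize (q 0).2.2 = b
      revert a b
      decide
    obtain ⟨h', hmem, hh⟩ := double_same_parity hat _ q hp' hq h0'
    refine ⟨h' * tPerm g, ?_, ?_⟩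
    · exact mul_mem (hplus hmem)
        ((le_sup_right : _ ≤ doubleGroup X g)
          (Subgroup.subset_closure (Set.mem_singleton _)))
    · intro i
      have := hh i
      simpa using this


end Doubling
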